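/- The additive integrality gap of Q'_n is 0.75n; that is, the optimal value of the LP relaxation of Q'_n (equal to 6.75n) minus the optimal value of the mixed-integer program Q'_n (equal to 6n) is 0.75n. -/

import Mathlib

/-- The polytope `P = {(x,y) ∈ [0,1]² | -7x + y ≤ 0.3, 5x + 8y ≤ 8.5, 3x + 2y ≤ 3.7}`. -/
def P : Set (ℝ × ℝ) :=
  {p | 0 ≤ p.1 ∧ p.1 ≤ 1 ∧ 0 ≤ p.2 ∧ p.2 ≤ 1 ∧
    -7 * p.1 + p.2 ≤ 0.3 ∧ 5 * p.1 + 8 * p.2 ≤ 8.5 ∧ 3 * p.1 + 2 * p.2 ≤ 3.7}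

/-- `(x, y)` has integer coordinates. -/
def IsIntPt (p : ℝ × ℝ) : Prop := (∃ a : ℤ, p.1 = a) ∧ (∃ b : ℤ, p.2 = b)

/-- Feasibility for the MIP `Q'_n`: `(xᵢ, yᵢ) ∈ P ∩ ℤ²` for all `i`,
`13xᵢ + 10yᵢ ≤ z` for all `i`, and `z ≤ 14`. -/
def Q'nFeas (n : ℕ) (xy : Fin n → ℝ × ℝ) (z : ℝ) : Prop :=
  (∀ i, xy i ∈ P ∧ IsIntPt (xy i) ∧ 13 * (xy i).1 + 10 * (xy i).2 ≤ z) ∧ z ≤ 14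

/-- Feasibility for the LP relaxation of `Q'_n` (integrality dropped). -/
def Q'nLPFeas (n : ℕ) (xy : Fin n → ℝ × ℝ) (z : ℝ) : Prop :=
  (∀ i, xy i ∈ P ∧ 13 * (xy i).1 + 10 * (xy i).2 ≤ z) ∧ z ≤ 14

/-- The objective of `Q'_n`: `6 ∑ xᵢ + 5 ∑ yᵢ`. -/
noncomputable def QnObj (n : ℕ) (xy : Fin n → ℝ × ℝ) : ℝ :=
  6 * ∑ i, (xy i).1 + 5 * ∑ i, (xy i).2

/-!
The objective separates over the blocks `i`, so both optima are `n` times the best value of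
`6x + 5y` on a single block, attained by repeating one optimal point. In the relaxation a block
is bounded by `13x + 10y ≤ 14` and `5x + 8y ≤ 8.5`, both tight at `(1/2, 3/4)`, where `6x + 5y`
reaches `6.75`. The only integer points of `P` are `(0, 0)` and `(1, 0)`, giving at most `6`.
-/

lemma QnObj_eq_sum (n : ℕ) (xy : Fin n → ℝ × ℝ) :
    QnObj n xy = ∑ i, (6 * (xy i).1 + 5 * (xy i).2) := by
  simp only [QnObj, Finset.mul_sum, Finset.sum_add_distrib]

lemma QnObj_le_of_forall_le {n : ℕ} {xy : Fin n → ℝ × ℝ} {c : ℝ}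
    (h : ∀ i, 6 * (xy i).1 + 5 * (xy i).2 ≤ c) : QnObj n xy ≤ c * n := by
  calc QnObj n xy = ∑ i, (6 * (xy i).1 + 5 * (xy i).2) := QnObj_eq_sum n xy
    _ ≤ ∑ _i : Fin n, c := Finset.sum_le_sum fun i _ => h i
    _ = c * n := by simp [mul_comm]

lemma QnObj_const (n : ℕ) (p : ℝ × ℝ) :
    QnObj n (fun _ => p) = (6 * p.1 + 5 * p.2) * n := by
  simp only [QnObj_eq_sum, Finset.sum_const, Finset.card_univ, Fintype.card_fin, nsmul_eq_mul]
  ring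

lemma isGreatest_QnObj_of_forall_le {n : ℕ} {Feas : (Fin n → ℝ × ℝ) → ℝ → Prop}
    {p : ℝ × ℝ} {z₀ c : ℝ} (hp : Feas (fun _ => p) z₀) (hc : 6 * p.1 + 5 * p.2 = c)
    (hle : ∀ xy z, Feas xy z → ∀ i, 6 * (xy i).1 + 5 * (xy i).2 ≤ c) :
    IsGreatest {v : ℝ | ∃ (xy : Fin n → ℝ × ℝ) (z : ℝ), Feas xy z ∧ QnObj n xy = v} (c * n) :=
  ⟨⟨_, z₀, hp, by rw [QnObj_const, hc]⟩,
    fun _ ⟨xy, z, hfeas, hv⟩ => hv ▸ QnObj_le_of_forall_le (hle xy z hfeas)⟩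

lemma objective_le_of_mem_P_of_le_14 {p : ℝ × ℝ} (hP : p ∈ P)
    (h13 : 13 * p.1 + 10 * p.2 ≤ 14) : 6 * p.1 + 5 * p.2 ≤ 6.75 := by
  obtain ⟨-, -, -, -, -, h58, -⟩ := hP
  -- `54 (6x + 5y) = 23 (13x + 10y) + 5 (5x + 8y)`
  norm_num at h58 ⊢
  linarith

lemma IsIntPt.snd_eq_zero_of_mem_P {p : ℝ × ℝ} (hI : IsIntPt p) (hP : p ∈ P) : p.2 = 0 := by
  obtain ⟨⟨a, ha⟩, ⟨b, hb⟩⟩ := hI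
  obtain ⟨-, -, hb0, -, h7, h58, -⟩ := hP
  rw [ha, hb] at *
  have hb0 : 0 ≤ b := by exact_mod_cast hb0
  have h7 : -7 * a + b < 1 := by exact_mod_cast (by linarith : (-7 * a + b : ℝ) < 1)
  have h58 : 5 * a + 8 * b < 9 := by exact_mod_cast (by linarith : (5 * a + 8 * b : ℝ) < 9)
  exact_mod_cast (by omega : b = 0)

lemma objective_le_of_mem_P_of_isIntPt {p : ℝ × ℝ} (hP : p ∈ P) (hI : IsIntPt p) :
    6 * p.1 + 5 * p.2 ≤ 6 := by
  rw [hI.snd_eq_zero_of_mem_P hP]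
  linarith [hP.2.1]

/-- The additive integrality gap of `Q'_n` is `0.75n`: the optimal value of the LP relaxation
of `Q'_n` is `6.75n`, the optimal value of the MIP `Q'_n` is `6n`, and their difference is
`0.75n`. -/
theorem Q'n_integrality_gap (n : ℕ) :
    IsGreatest {v : ℝ | ∃ (xy : Fin n → ℝ × ℝ) (z : ℝ), Q'nLPFeas n xy z ∧ QnObj n xy = v}
      (6.75 * n) ∧
    IsGreatest {v : ℝ | ∃ (xy : Fin n → ℝ × ℝ) (z : ℝ), Q'nFeas n xy z ∧ QnObj n xy = v}
      (6 * n) ∧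
    (6.75 : ℝ) * n - 6 * n = 0.75 * n := by
  refine ⟨?_, ?_, by ring⟩
  · refine isGreatest_QnObj_of_forall_le (p := (0.5, 0.75)) (z₀ := 14) ?_ (by norm_num) ?_
    · exact ⟨fun _ => ⟨by norm_num [P], by norm_num⟩, le_rfl⟩
    · exact fun xy z ⟨hfeas, hz⟩ i =>
        objective_le_of_mem_P_of_le_14 (hfeas i).1 ((hfeas i).2.trans hz)
  · refine isGreatest_QnObj_of_forall_le (p := (1, 0)) (z₀ := 14) ?_ (by norm_num) ?_
    · exact ⟨fun _ => ⟨by norm_num [P], ⟨⟨1, by simp⟩, ⟨0, by simp⟩⟩, by norm_num⟩, le_rfl⟩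
    · exact fun xy _ ⟨hfeas, _⟩ i => objective_le_of_mem_P_of_isIntPt (hfeas i).1 (hfeas i).2.1
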